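/- Let K be a finite abstract simplicial complex, f₀ an injective real-valued function on the vertices of K, and ε > 0. Then there exists a discrete Morse function f : K → ℝ such that: (a) the gradient vector field induced by f is exactly {(r(σ), σ) : σ is a left-right parent of K}; (b) f agrees with f₀ on the vertices of K; and (c) for every simplex σ ∈ K, |f(σ) − max_{v ∈ σ} f₀(v)| ≤ ε. -/

import Mathlib

/-
The rightmost face r(σ) of σ is σ minus its f₀-least vertex m, and σ is a left-right parent
exactly when m is also the f₀-least vertex that can be added to r(σ); in particular r(σ) is then
not a left-right parent itself. Order simplices by the key k(σ) = C·|σ| + min f₀(σ), except that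
a left-right parent gets k(σ) = k(r(σ)) − s, just below its rightmost face. With s below every
gap between vertex values and C above their spread, k increases along every proper face
relation except the left-right pairs. Then f(σ) = max f₀(σ) + η·(k(σ) − C − max f₀(σ)) works
for small η > 0: the correction vanishes on vertices, and wherever max f₀ changes it changes by
more than s, which the correction cannot undo.
-/

open Finset

attribute [local instance] Classical.propDecidable

/-- A finite abstract simplicial complex: a finite family of nonempty finite sets
(simplices) closed under taking nonempty subsets. -/
def IsComplex {V : Type*} [DecidableEq V] (K : Finset (Finset V)) : Prop :=
  (∀ σ ∈ K, σ.Nonempty) ∧ ∀ σ ∈ K, ∀ τ : Finset V, τ ⊆ σ → τ.Nonempty → τ ∈ K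

/-- A discrete Morse function: for every simplex `σ ∈ K`, at most one coface `β ⊋ σ`
has `f β ≤ f σ`, and at most one face `γ ⊊ σ` has `f γ ≥ f σ`. -/
def IsDMF {V : Type*} [DecidableEq V] (K : Finset (Finset V)) (f : Finset V → ℝ) : Prop :=
  ∀ σ ∈ K,
    (K.filter fun β => σ ⊂ β ∧ f β ≤ f σ).card ≤ 1 ∧
    (K.filter fun γ => γ ⊂ σ ∧ f σ ≤ f γ).card ≤ 1

/-- A simplex is critical if both counts in the Morse condition are zero. -/
def IsCritical {V : Type*} [DecidableEq V] (K : Finset (Finset V)) (f : Finset V → ℝ)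
    (σ : Finset V) : Prop :=
  (K.filter fun β => σ ⊂ β ∧ f β ≤ f σ).card = 0 ∧
  (K.filter fun γ => γ ⊂ σ ∧ f σ ≤ f γ).card = 0

/-- The decreasing list of `f0`-values of the vertices of a simplex. -/
noncomputable def descList {V : Type*} [DecidableEq V] (f0 : V → ℝ) (σ : Finset V) :
    List ℝ :=
  ((σ.image f0).sort (· ≤ ·)).reverse

/-- Lexicographic comparison of simplices: compare the decreasing sequences of
`f0`-values of their vertices lexicographically. -/
noncomputable def lexLt {V : Type*} [DecidableEq V] (f0 : V → ℝ) (σ τ : Finset V) : Prop :=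
  List.Lex (· < ·) (descList f0 σ) (descList f0 τ)

/-- `τ` is the rightmost face of `σ`: the codimension-one face of `σ` of maximum
lexicographic value. -/
noncomputable def IsRChild {V : Type*} [DecidableEq V] (K : Finset (Finset V)) (f0 : V → ℝ)
    (σ τ : Finset V) : Prop :=
  τ ∈ K ∧ τ ⊂ σ ∧ τ.card + 1 = σ.card ∧
    ∀ τ' ∈ K, τ' ⊂ σ → τ'.card + 1 = σ.card → τ' = τ ∨ lexLt f0 τ' τ

/-- `σ` is the leftmost coface of `τ`: the codimension-one coface of `τ` of minimum
lexicographic value. -/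
noncomputable def IsLParent {V : Type*} [DecidableEq V] (K : Finset (Finset V)) (f0 : V → ℝ)
    (τ σ : Finset V) : Prop :=
  σ ∈ K ∧ τ ⊂ σ ∧ τ.card + 1 = σ.card ∧
    ∀ σ' ∈ K, τ ⊂ σ' → τ.card + 1 = σ'.card → σ' = σ ∨ lexLt f0 σ σ'

/-- The rightmost face of `σ` (an arbitrary default if none exists). -/
noncomputable def rchild {V : Type*} [DecidableEq V] (K : Finset (Finset V)) (f0 : V → ℝ)
    (σ : Finset V) : Finset V :=
  if h : ∃ τ, IsRChild K f0 σ τ then h.choose else ∅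

/-- `σ` is a left-right parent: the leftmost coface of its rightmost face is `σ` itself,
i.e. `ℓ(r(σ)) = σ`. -/
noncomputable def LeftRightParent {V : Type*} [DecidableEq V] (K : Finset (Finset V))
    (f0 : V → ℝ) (σ : Finset V) : Prop :=
  (∃ τ, IsRChild K f0 σ τ) ∧ IsLParent K f0 (rchild K f0 σ) σ

/-- The maximum `f0`-value over the vertices of a simplex. -/
noncomputable def maxVal {V : Type*} [DecidableEq V] (f0 : V → ℝ) (σ : Finset V) : ℝ :=
  if h : σ.Nonempty then σ.sup' h f0 else 0

open Filter Topology

namespace Finset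

lemma reverse_sort_le {α : Type*} [LinearOrder α] (S : Finset α) :
    (S.sort (· ≤ ·)).reverse = S.sort (· ≥ ·) := by
  convert ((sortedGT_sort S).eq_reverse_of_mem_iff_of_sortedLT (fun _ => by simp)
    (sortedLT_sort S)).symm

lemma lex_sort_ge_insert {α : Type*} [LinearOrder α] (A : Finset α) {a b : α}
    (ha : a ∉ A) (hb : b ∉ A) (hab : a < b) :
    List.Lex (· < ·) ((insert a A).sort (· ≥ ·)) ((insert b A).sort (· ≥ ·)) := by
  induction A using Finset.induction_on_max with
  | empty => simpa using hab
  | insert M A hM ih =>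
    simp only [mem_insert, not_or] at ha hb
    rcases lt_or_gt_of_ne hb.1 with hbM | hMb
    · have hsort : ∀ c, c < M →
          (insert c (insert M A)).sort (· ≥ ·) = M :: (insert c A).sort (· ≥ ·) := by
        intro c hcM
        rw [insert_comm, sort_insert]
        · simp only [mem_insert, forall_eq_or_imp]
          exact ⟨hcM.le, fun x hx => (hM x hx).le⟩
        · simpa [hcM.ne'] using fun h => (hM M h).false
      rw [hsort a (hab.trans hbM), hsort b hbM]
      exact List.Lex.cons (ih ha.2 hb.2)
    · have hlt : ∀ x ∈ insert a (insert M A), x < b := by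
        simp only [mem_insert, forall_eq_or_imp]
        exact ⟨hab, hMb, fun x hx => (hM x hx).trans hMb⟩
      rw [sort_insert (a := b) (s := insert M A) _ (fun x hx => (hlt x (mem_insert_of_mem hx)).le)
        (by simpa using hb)]
      obtain ⟨c, t, hct⟩ := List.exists_cons_of_ne_nil
        (List.ne_nil_of_mem ((mem_sort (· ≥ ·)).2 (mem_insert_self a (insert M A))))
      rw [hct]
      exact List.Lex.rel (hlt c ((mem_sort (· ≥ ·)).1 (hct ▸ List.mem_cons_self)))

lemma eq_erase_of_ssubset_of_card_add_one {α : Type*} [DecidableEq α] {τ σ : Finset α}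
    (h : τ ⊂ σ) (hc : τ.card + 1 = σ.card) {u : α} (hu : u ∈ σ) (hu' : u ∉ τ) :
    τ = σ.erase u :=
  eq_of_subset_of_card_le (fun y hy => mem_erase.2 ⟨fun h => hu' (h ▸ hy), h.1 hy⟩)
    (by rw [card_erase_of_mem hu]; omega)

lemma exists_pos_forall_add_lt (S : Finset ℝ) :
    ∃ s > 0, ∀ x ∈ S, ∀ y ∈ S, x < y → x + s < y := by
  have : ∀ᶠ s in 𝓝 (0 : ℝ), ∀ x ∈ S, ∀ y ∈ S, x < y → x + s < y := by
    refine (eventually_all_finset S).2 fun x _ => (eventually_all_finset S).2 fun y _ => ?_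
    by_cases hxy : x < y
    · filter_upwards [eventually_lt_nhds (sub_pos.2 hxy)] with s hs _
      linarith
    · exact Eventually.of_forall fun _ h => absurd h hxy
  obtain ⟨s, hs, hpos⟩ := ((this.filter_mono (nhdsWithin_le_nhds (s := Set.Ioi 0))).and
    self_mem_nhdsWithin).exists
  exact ⟨s, hpos, hs⟩

lemma exists_forall_add_lt_add (S : Finset ℝ) (s : ℝ) :
    ∃ C, ∀ x ∈ S, ∀ y ∈ S, x + s < y + C :=
  ((eventually_all_finset S).2 fun x _ => (eventually_all_finset S).2 fun y _ =>
    (eventually_gt_atTop (x + s - y)).mono fun _ h => by linarith).exists (f := atTop)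

lemma exists_pos_forall_abs_mul_lt {α : Type*} (K : Finset α) (c : α → ℝ) {r : ℝ}
    (hr : 0 < r) : ∃ η > 0, ∀ a ∈ K, |η * c a| < r := by
  have : ∀ᶠ η in 𝓝 (0 : ℝ), ∀ a ∈ K, |η * c a| < r :=
    (eventually_all_finset K).2 fun a _ => by
      simpa using ((continuous_id.mul continuous_const).abs.tendsto (0 : ℝ)).eventually
        (eventually_lt_nhds (by simpa using hr))
  obtain ⟨η, hη, hpos⟩ := ((this.filter_mono (nhdsWithin_le_nhds (s := Set.Ioi 0))).and
    self_mem_nhdsWithin).exists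
  exact ⟨η, hpos, hη⟩

end Finset

noncomputable def minVal {V : Type*} (f0 : V → ℝ) (σ : Finset V) : ℝ :=
  if h : σ.Nonempty then σ.inf' h f0 else 0

lemma minVal_eq_inf' {V : Type*} {f0 : V → ℝ} {σ : Finset V} (h : σ.Nonempty) :
    minVal f0 σ = σ.inf' h f0 :=
  dif_pos h

section Complex

variable {V : Type*} [DecidableEq V] {K : Finset (Finset V)} {f0 : V → ℝ}

lemma lexLt_insert {ρ : Finset V} {u w : V} (hu : f0 u ∉ ρ.image f0) (hw : f0 w ∉ ρ.image f0)
    (h : f0 u < f0 w) : lexLt f0 (insert u ρ) (insert w ρ) := by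
  unfold lexLt descList
  rw [image_insert, image_insert, reverse_sort_le, reverse_sort_le]
  exact lex_sort_ge_insert _ hu hw h

lemma lexLt_asymm {σ τ : Finset V} (h : lexLt f0 σ τ) : ¬ lexLt f0 τ σ :=
  (List.Lex.asymm (· < ·)).asymm _ _ h

lemma IsRChild.unique {σ τ τ' : Finset V} (h : IsRChild K f0 σ τ) (h' : IsRChild K f0 σ τ') :
    τ = τ' := by
  rcases h'.2.2.2 τ h.1 h.2.1 h.2.2.1 with he | hlt
  · exact he
  · exact ((h.2.2.2 τ' h'.1 h'.2.1 h'.2.2.1).resolve_right (lexLt_asymm hlt)).symm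

lemma IsLParent.unique {τ σ σ' : Finset V} (h : IsLParent K f0 τ σ)
    (h' : IsLParent K f0 τ σ') : σ = σ' := by
  rcases h.2.2.2 σ' h'.1 h'.2.1 h'.2.2.1 with he | hlt
  · exact he.symm
  · exact (h'.2.2.2 σ h.1 h.2.1 h.2.2.1).resolve_right (lexLt_asymm hlt)

lemma isRChild_rchild {σ : Finset V} (h : ∃ τ, IsRChild K f0 σ τ) :
    IsRChild K f0 σ (rchild K f0 σ) := by
  rw [rchild, dif_pos h]
  exact h.choose_spec

lemma IsComplex.singleton_mem (hK : IsComplex K) {σ : Finset V} (hσ : σ ∈ K) {v : V}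
    (hv : v ∈ σ) : {v} ∈ K :=
  hK.2 σ hσ {v} (singleton_subset_iff.2 hv) (singleton_nonempty v)

lemma IsComplex.apply_lt_of_forall_le (hK : IsComplex K) (hinj : Set.InjOn f0 {v : V | {v} ∈ K})
    {σ : Finset V} (hσ : σ ∈ K) {m y : V} (hm : m ∈ σ) (hmin : ∀ y ∈ σ, f0 m ≤ f0 y)
    (hy : y ∈ σ) (hne : y ≠ m) : f0 m < f0 y :=
  (hmin y hy).lt_of_ne fun h => hne (hinj (hK.singleton_mem hσ hm) (hK.singleton_mem hσ hy) h).symm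

lemma IsComplex.apply_notMem_image (hK : IsComplex K) (hinj : Set.InjOn f0 {v : V | {v} ∈ K})
    {ρ : Finset V} {u : V} (hρ : insert u ρ ∈ K) (hu : u ∉ ρ) : f0 u ∉ ρ.image f0 := by
  intro h
  obtain ⟨y, hy, hyu⟩ := mem_image.1 h
  have hy' : y ∈ insert u ρ := mem_insert_of_mem hy
  exact hu (hinj (hK.singleton_mem hρ hy') (hK.singleton_mem hρ (mem_insert_self u ρ)) hyu ▸ hy)

lemma isRChild_erase (hK : IsComplex K) (hinj : Set.InjOn f0 {v : V | {v} ∈ K})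
    {σ : Finset V} (hσ : σ ∈ K) (hc : 2 ≤ σ.card) {m : V} (hm : m ∈ σ)
    (hmin : ∀ y ∈ σ, f0 m ≤ f0 y) : IsRChild K f0 σ (σ.erase m) := by
  have hcard : (σ.erase m).card + 1 = σ.card := card_erase_add_one hm
  have hσm : σ.erase m ∈ K := hK.2 σ hσ _ (erase_subset m σ) (card_pos.1 (by omega))
  refine ⟨hσm, erase_ssubset hm, hcard, fun τ hτ hsub hτc => ?_⟩
  obtain ⟨u, hu, huτ⟩ := exists_of_ssubset hsub
  obtain rfl := eq_erase_of_ssubset_of_card_add_one hsub hτc hu huτ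
  by_cases hum : u = m
  · exact Or.inl (hum ▸ rfl)
  refine Or.inr ?_
  have hmρ : m ∉ (σ.erase m).erase u := fun h => (mem_erase.1 (mem_of_mem_erase h)).1 rfl
  have huρ : u ∉ (σ.erase m).erase u := fun h => (mem_erase.1 h).1 rfl
  have hσu : σ.erase u = insert m ((σ.erase m).erase u) := by
    rw [erase_right_comm, insert_erase (mem_erase.2 ⟨Ne.symm hum, hm⟩)]
  have hσm' : σ.erase m = insert u ((σ.erase m).erase u) :=
    (insert_erase (mem_erase.2 ⟨hum, hu⟩)).symm
  have h := lexLt_insert (hK.apply_notMem_image hinj (hσu ▸ hτ) hmρ)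
    (hK.apply_notMem_image hinj (hσm' ▸ hσm) huρ)
    (hK.apply_lt_of_forall_le hinj hσ hm hmin hu hum)
  rwa [← hσu, ← hσm'] at h

lemma IsRChild.exists_eq_erase (hK : IsComplex K) (hinj : Set.InjOn f0 {v : V | {v} ∈ K})
    {σ τ : Finset V} (hσ : σ ∈ K) (h : IsRChild K f0 σ τ) :
    ∃ m ∈ σ, (∀ y ∈ σ, f0 m ≤ f0 y) ∧ τ = σ.erase m := by
  obtain ⟨m, hm, hmin⟩ := exists_min_image σ f0 (hK.1 σ hσ)
  have hc : 2 ≤ σ.card := by have := card_pos.2 (hK.1 τ h.1); have := h.2.2.1; omega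
  exact ⟨m, hm, hmin, h.unique (isRChild_erase hK hinj hσ hc hm hmin)⟩

lemma IsLParent.apply_le (hK : IsComplex K) (hinj : Set.InjOn f0 {v : V | {v} ∈ K})
    {τ : Finset V} {a x : V} (h : IsLParent K f0 τ (insert a τ)) (ha : a ∉ τ) (hx : x ∉ τ)
    (hxK : insert x τ ∈ K) : f0 a ≤ f0 x := by
  by_contra! hlt
  rcases h.2.2.2 _ hxK (ssubset_insert hx) (card_insert_of_notMem hx).symm with he | hlex
  · have : x ∈ insert a τ := he ▸ mem_insert_self x τ
    rcases mem_insert.1 this with rfl | hxτ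
    · exact lt_irrefl _ hlt
    · exact hx hxτ
  · exact lexLt_asymm hlex (lexLt_insert (hK.apply_notMem_image hinj hxK hx)
      (hK.apply_notMem_image hinj h.1 ha) hlt)

lemma LeftRightParent.exists_erase (hK : IsComplex K) (hinj : Set.InjOn f0 {v : V | {v} ∈ K})
    {σ : Finset V} (h : LeftRightParent K f0 σ) :
    ∃ m ∈ σ, (∀ y ∈ σ, f0 m ≤ f0 y) ∧ rchild K f0 σ = σ.erase m ∧
      ∀ x ∉ σ.erase m, insert x (σ.erase m) ∈ K → f0 m ≤ f0 x := by
  obtain ⟨m, hm, hmin, hr⟩ := (isRChild_rchild h.1).exists_eq_erase hK hinj h.2.1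
  have hlp : IsLParent K f0 (σ.erase m) (insert m (σ.erase m)) := by
    rw [insert_erase hm, ← hr]
    exact h.2
  exact ⟨m, hm, hmin, hr, fun x hx hxK => hlp.apply_le hK hinj (notMem_erase m σ) hx hxK⟩

lemma LeftRightParent.not_rchild (hK : IsComplex K) (hinj : Set.InjOn f0 {v : V | {v} ∈ K})
    {σ : Finset V} (h : LeftRightParent K f0 σ) : ¬ LeftRightParent K f0 (rchild K f0 σ) := by
  intro h'
  obtain ⟨m, hm, hmin, hr, -⟩ := h.exists_erase hK hinj
  obtain ⟨c, hc, -, -, hcmin⟩ := h'.exists_erase hK hinj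
  rw [hr] at hc hcmin
  have hcm : c ≠ m := (mem_erase.1 hc).1
  have hmc : f0 m < f0 c := hK.apply_lt_of_forall_le hinj h.2.1 hm hmin (mem_of_mem_erase hc) hcm
  refine (hcmin m (fun h => notMem_erase m σ (mem_of_mem_erase h)) ?_).not_gt hmc
  refine hK.2 σ h.2.1 _ (insert_subset hm ((erase_subset _ _).trans (erase_subset _ _)))
    (insert_nonempty _ _)

noncomputable def vertexValues (K : Finset (Finset V)) (f0 : V → ℝ) : Finset ℝ :=
  (K.biUnion id).image f0

lemma maxVal_eq_sup' {σ : Finset V} (h : σ.Nonempty) : maxVal f0 σ = σ.sup' h f0 := dif_pos h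

lemma minVal_mem_vertexValues (hK : IsComplex K) {σ : Finset V} (hσ : σ ∈ K) :
    minVal f0 σ ∈ vertexValues K f0 := by
  obtain ⟨m, hm, he⟩ := exists_mem_eq_inf' (hK.1 σ hσ) f0
  rw [minVal_eq_inf' (hK.1 σ hσ), he]
  exact mem_image_of_mem f0 (mem_biUnion.2 ⟨σ, hσ, hm⟩)

lemma maxVal_mem_vertexValues (hK : IsComplex K) {σ : Finset V} (hσ : σ ∈ K) :
    maxVal f0 σ ∈ vertexValues K f0 := by
  obtain ⟨m, hm, he⟩ := exists_mem_eq_sup' (hK.1 σ hσ) f0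
  rw [maxVal_eq_sup' (hK.1 σ hσ), he]
  exact mem_image_of_mem f0 (mem_biUnion.2 ⟨σ, hσ, hm⟩)

lemma maxVal_mono {σ β : Finset V} (hσ : σ.Nonempty) (h : σ ⊆ β) :
    maxVal f0 σ ≤ maxVal f0 β := by
  rw [maxVal_eq_sup' hσ, maxVal_eq_sup' (hσ.mono h)]
  exact sup'_mono f0 h hσ

lemma IsRChild.maxVal_eq (hK : IsComplex K) (hinj : Set.InjOn f0 {v : V | {v} ∈ K})
    {σ τ : Finset V} (hσ : σ ∈ K) (h : IsRChild K f0 σ τ) : maxVal f0 τ = maxVal f0 σ := by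
  obtain ⟨m, -, hmin, rfl⟩ := h.exists_eq_erase hK hinj hσ
  have hne : (σ.erase m).Nonempty := hK.1 _ h.1
  refine le_antisymm (maxVal_mono hne (erase_subset m σ)) ?_
  rw [maxVal_eq_sup' hne, maxVal_eq_sup' (hK.1 σ hσ)]
  refine sup'_le _ _ fun y hy => ?_
  by_cases hym : y = m
  · obtain ⟨z, hz⟩ := hne
    exact (hym ▸ hmin z (mem_of_mem_erase hz)).trans (le_sup' f0 hz)
  · exact le_sup' f0 (mem_erase.2 ⟨hym, hy⟩)

lemma IsRChild.minVal_lt (hK : IsComplex K) (hinj : Set.InjOn f0 {v : V | {v} ∈ K})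
    {σ β τ : Finset V} (hβ : β ∈ K) (h : IsRChild K f0 β τ) (hsub : σ ⊂ β)
    (hc : σ.card + 1 = β.card) (hne : σ ≠ τ) : minVal f0 σ < minVal f0 τ := by
  obtain ⟨m, hm, hmin, rfl⟩ := h.exists_eq_erase hK hinj hβ
  have hmσ : m ∈ σ := by
    by_contra hmσ
    exact hne (eq_erase_of_ssubset_of_card_add_one hsub hc hm hmσ)
  rw [minVal_eq_inf' ⟨m, hmσ⟩, minVal_eq_inf' (hK.1 _ h.1)]
  calc σ.inf' _ f0 ≤ f0 m := inf'_le f0 hmσ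
    _ < _ := (lt_inf'_iff _).2 fun y hy =>
      hK.apply_lt_of_forall_le hinj hβ hm hmin (mem_of_mem_erase hy) (mem_erase.1 hy).1

noncomputable def lrKey (K : Finset (Finset V)) (f0 : V → ℝ) (C s : ℝ) (σ : Finset V) : ℝ :=
  if LeftRightParent K f0 σ then C * (rchild K f0 σ).card + minVal f0 (rchild K f0 σ) - s
  else C * σ.card + minVal f0 σ

lemma lrKey_of_leftRightParent (hK : IsComplex K) (hinj : Set.InjOn f0 {v : V | {v} ∈ K})
    {C s : ℝ} {σ : Finset V} (h : LeftRightParent K f0 σ) :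
    lrKey K f0 C s σ = lrKey K f0 C s (rchild K f0 σ) - s := by
  rw [lrKey, if_pos h, lrKey, if_neg (h.not_rchild hK hinj)]

lemma lrKey_lt (hK : IsComplex K) (hinj : Set.InjOn f0 {v : V | {v} ∈ K}) {C s : ℝ}
    (hs : 0 < s) (hgap : ∀ x ∈ vertexValues K f0, ∀ y ∈ vertexValues K f0, x < y → x + s < y)
    (hC : ∀ x ∈ vertexValues K f0, ∀ y ∈ vertexValues K f0, x + s < y + C)
    {σ β : Finset V} (hσ : σ ∈ K) (hβ : β ∈ K) (hsub : σ ⊂ β)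
    (hnm : ¬ (LeftRightParent K f0 β ∧ σ = rchild K f0 β)) :
    lrKey K f0 C s σ < lrKey K f0 C s β := by
  have hCs : s < C := by
    have := hC _ (minVal_mem_vertexValues hK hσ) _ (minVal_mem_vertexValues hK hσ)
    linarith
  have hcard : ∀ τ ∈ K, ∀ τ' ∈ K, τ.card < τ'.card →
      C * τ.card + minVal f0 τ + s < C * τ'.card + minVal f0 τ' := by
    intro τ hτ τ' hτ' hlt
    have : (τ.card : ℝ) + 1 ≤ τ'.card := by exact_mod_cast hlt
    nlinarith [hC _ (minVal_mem_vertexValues hK hτ) _ (minVal_mem_vertexValues hK hτ')]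
  have hlt := card_lt_card hsub
  by_cases hσ' : LeftRightParent K f0 σ <;> by_cases hβ' : LeftRightParent K f0 β <;>
    simp only [lrKey, hσ', hβ', if_true, if_false]
  · obtain ⟨hrσ, -, hcσ, -⟩ := isRChild_rchild hσ'.1
    obtain ⟨hrβ, -, hcβ, -⟩ := isRChild_rchild hβ'.1
    linarith [hcard _ hrσ _ hrβ (by omega)]
  · obtain ⟨hrσ, -, hcσ, -⟩ := isRChild_rchild hσ'.1
    linarith [hcard _ hrσ _ hβ (by omega)]
  · have hrβ := isRChild_rchild hβ'.1
    by_cases hc : σ.card + 1 = β.card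
    -- `σ` is a facet of `β` other than `r(β)`, so it keeps the least vertex of `β`
    · have hmin := hrβ.minVal_lt hK hinj hβ hsub hc fun h => hnm ⟨hβ', h⟩
      have hcr : σ.card = (rchild K f0 β).card := by have := hrβ.2.2.1; omega
      rw [hcr]
      linarith [hgap _ (minVal_mem_vertexValues hK hσ) _ (minVal_mem_vertexValues hK hrβ.1) hmin]
    · linarith [hcard _ hσ _ hrβ.1 (by have := hrβ.2.2.1; omega)]
  · linarith [hcard _ hσ _ hβ hlt]

noncomputable def lrMorse (K : Finset (Finset V)) (f0 : V → ℝ) (C s η : ℝ) (σ : Finset V) : ℝ :=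
  maxVal f0 σ + η * (lrKey K f0 C s σ - C - maxVal f0 σ)

lemma lrMorse_singleton (hK : IsComplex K) {C s η : ℝ} (v : V) :
    lrMorse K f0 C s η {v} = f0 v := by
  have hnot : ¬ LeftRightParent K f0 {v} := fun h => by
    obtain ⟨hr, -, hc, -⟩ := isRChild_rchild h.1
    have := card_pos.2 (hK.1 _ hr)
    simp only [card_singleton] at hc
    omega
  simp [lrMorse, lrKey, hnot, minVal_eq_inf', maxVal_eq_sup']

lemma lrMorse_rchild_lt (hK : IsComplex K) (hinj : Set.InjOn f0 {v : V | {v} ∈ K})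
    {C s η : ℝ} (hs : 0 < s) (hη : 0 < η) {σ : Finset V} (h : LeftRightParent K f0 σ) :
    lrMorse K f0 C s η σ < lrMorse K f0 C s η (rchild K f0 σ) := by
  rw [lrMorse, lrMorse, lrKey_of_leftRightParent hK hinj h,
    (isRChild_rchild h.1).maxVal_eq hK hinj h.2.1]
  nlinarith

lemma lrMorse_lt (hK : IsComplex K) (hinj : Set.InjOn f0 {v : V | {v} ∈ K}) {C s η : ℝ}
    (hs : 0 < s) (hgap : ∀ x ∈ vertexValues K f0, ∀ y ∈ vertexValues K f0, x < y → x + s < y)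
    (hC : ∀ x ∈ vertexValues K f0, ∀ y ∈ vertexValues K f0, x + s < y + C) (hη : 0 < η)
    (hsmall : ∀ σ ∈ K, |lrMorse K f0 C s η σ - maxVal f0 σ| < s / 2)
    {σ β : Finset V} (hσ : σ ∈ K) (hβ : β ∈ K) (hsub : σ ⊂ β)
    (hnm : ¬ (LeftRightParent K f0 β ∧ σ = rchild K f0 β)) :
    lrMorse K f0 C s η σ < lrMorse K f0 C s η β := by
  rcases (maxVal_mono (hK.1 σ hσ) hsub.1).eq_or_lt with heq | hlt
  · have := lrKey_lt hK hinj hs hgap hC hσ hβ hsub hnm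
    rw [lrMorse, lrMorse, heq]
    nlinarith
  · have := hgap _ (maxVal_mem_vertexValues hK hσ) _ (maxVal_mem_vertexValues hK hβ) hlt
    linarith [abs_lt.1 (hsmall σ hσ), abs_lt.1 (hsmall β hβ)]

lemma isDMF_of_le_iff {f : Finset V → ℝ}
    (hf : ∀ σ ∈ K, ∀ β ∈ K, σ ⊂ β → (f β ≤ f σ ↔ LeftRightParent K f0 β ∧ σ = rchild K f0 β)) :
    IsDMF K f := by
  refine fun σ hσ => ⟨card_le_one.2 fun β hβ β' hβ' => ?_, card_le_one.2 fun γ hγ γ' hγ' => ?_⟩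
  · simp only [mem_filter] at hβ hβ'
    obtain ⟨hlr, rfl⟩ := (hf _ hσ β hβ.1 hβ.2.1).1 hβ.2.2
    obtain ⟨hlr', he⟩ := (hf _ hσ β' hβ'.1 hβ'.2.1).1 hβ'.2.2
    exact hlr.2.unique (he ▸ hlr'.2)
  · simp only [mem_filter] at hγ hγ'
    rw [((hf γ hγ.1 σ hσ hγ.2.1).1 hγ.2.2).2, ((hf γ' hγ'.1 σ hσ hγ'.2.1).1 hγ'.2.2).2]

end Complex

/-- There is a discrete Morse function `f` whose induced gradient vector
field is exactly the left-right pairs, which agrees with `f₀` on vertices, and which is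
`ε`-close to the maximum vertex value on every simplex. -/
theorem stmt_8 {V : Type*} [DecidableEq V] (K : Finset (Finset V)) (f0 : V → ℝ)
    (hK : IsComplex K) (hinj : Set.InjOn f0 {v : V | {v} ∈ K})
    (ε : ℝ) (hε : 0 < ε) :
    ∃ f : Finset V → ℝ, IsDMF K f ∧
      (∀ σ ∈ K, ∀ τ ∈ K,
        (σ ⊂ τ ∧ τ.card = σ.card + 1 ∧ f τ ≤ f σ) ↔
          (LeftRightParent K f0 τ ∧ σ = rchild K f0 τ)) ∧
      (∀ v : V, {v} ∈ K → f {v} = f0 v) ∧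
      (∀ σ ∈ K, |f σ - maxVal f0 σ| ≤ ε) := by
  obtain ⟨s, hs, hgap⟩ := exists_pos_forall_add_lt (vertexValues K f0)
  obtain ⟨C, hC⟩ := exists_forall_add_lt_add (vertexValues K f0) s
  obtain ⟨η, hη, hsmall⟩ := exists_pos_forall_abs_mul_lt K
    (fun σ => lrKey K f0 C s σ - C - maxVal f0 σ) (lt_min hε (half_pos hs))
  have hsmall' : ∀ σ ∈ K, |lrMorse K f0 C s η σ - maxVal f0 σ| < min ε (s / 2) := by
    simpa [lrMorse] using hsmall
  have hle : ∀ σ ∈ K, ∀ β ∈ K, σ ⊂ β → (lrMorse K f0 C s η β ≤ lrMorse K f0 C s η σ ↔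
      LeftRightParent K f0 β ∧ σ = rchild K f0 β) := fun σ hσ β hβ hsub =>
    ⟨fun hle => by_contra fun hnm => (lrMorse_lt hK hinj hs hgap hC hη
        (fun τ hτ => (hsmall' τ hτ).trans_le (min_le_right _ _)) hσ hβ hsub hnm).not_ge hle,
      fun ⟨hlr, he⟩ => he ▸ (lrMorse_rchild_lt hK hinj hs hη hlr).le⟩
  refine ⟨lrMorse K f0 C s η, isDMF_of_le_iff hle, fun σ hσ τ hτ => ⟨?_, ?_⟩,
    fun v _ => lrMorse_singleton hK v, fun σ hσ => (hsmall' σ hσ).le.trans (min_le_left _ _)⟩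
  · rintro ⟨hsub, -, hfle⟩
    exact (hle σ hσ τ hτ hsub).1 hfle
  · rintro ⟨hlr, rfl⟩
    obtain ⟨-, hsub, hc, -⟩ := isRChild_rchild hlr.1
    exact ⟨hsub, hc.symm, (hle _ hσ τ hτ hsub).2 ⟨hlr, rfl⟩⟩
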